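/- Let U ⊆ ℝ² be open, ω : U → ℝ smooth, and p : U → ℍ a smooth map into the unit quaternions satisfying ⟨p_u,p_u⟩ = ⟨p_v,p_v⟩ = 2e^ω, ⟨p_u,p_v⟩ = 0 and p_uu + p_vv = −4e^ω p. Let N = p · ((p⁻¹p_u) × (p⁻¹p_v))/(2e^ω). If in addition ⟨p_uu − p_vv, N⟩ = −4 and ⟨p_uv, N⟩ = 0 (i.e. the Hopf differential is normalized to σ(∂z,∂z) = −1), then ω satisfies the Sinh-Gordon equation ω_uu + ω_vv = −8 sinh ω on U. -/

import Mathlib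

noncomputable section

open Quaternion

/-- Euclidean inner product on the quaternions: `⟨x,y⟩ = Re (x * star y)`. -/
def ipQ (x y : ℍ[ℝ]) : ℝ := (x * star y).re

/-- Cross product of (imaginary) quaternions: `α × β = ½(αβ − βα)`. -/
def crossQ (a b : ℍ[ℝ]) : ℍ[ℝ] := (1 / 2 : ℝ) • (a * b - b * a)

/-- Partial derivative in the first coordinate direction of `ℝ²`. -/
def pdu {E : Type*} [NormedAddCommGroup E] [NormedSpace ℝ E]
    (f : ℝ × ℝ → E) (x : ℝ × ℝ) : E := fderiv ℝ f x (1, 0)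

/-- Partial derivative in the second coordinate direction of `ℝ²`. -/
def pdv {E : Type*} [NormedAddCommGroup E] [NormedSpace ℝ E]
    (f : ℝ × ℝ → E) (x : ℝ × ℝ) : E := fderiv ℝ f x (0, 1)

open scoped RealInnerProductSpace

namespace S11

lemma re_comm (q r : ℍ[ℝ]) : (q * r).re = (r * q).re := by
  simp only [Quaternion.re_mul]; ring

lemma star_eq_neg' {q : ℍ[ℝ]} (h : q.re = 0) : star q = -q := by
  ext <;> simp [h]

variable {E : Type*} [NormedAddCommGroup E] [NormedSpace ℝ E]

lemma pdu_eq (f : ℝ × ℝ → E) (y : ℝ × ℝ) : fderiv ℝ f y (1, 0) = pdu f y := rfl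

lemma pdv_eq (f : ℝ × ℝ → E) (y : ℝ × ℝ) : fderiv ℝ f y (0, 1) = pdv f y := rfl

lemma contDiffAt_pd {f : ℝ × ℝ → E} {y : ℝ × ℝ} (hf : ContDiffAt ℝ (⊤ : ℕ∞) f y) (v : ℝ × ℝ) :
    ContDiffAt ℝ (⊤ : ℕ∞) (fun z => fderiv ℝ f z v) y := by
  have h1 : ContDiffAt ℝ (⊤ : ℕ∞) (fderiv ℝ f) y := hf.fderiv_right (by simp)
  exact ((ContinuousLinearMap.apply ℝ E v).contDiff.contDiffAt).comp y h1

lemma contDiffAt_pdu {f : ℝ × ℝ → E} {y : ℝ × ℝ} (hf : ContDiffAt ℝ (⊤ : ℕ∞) f y) :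
    ContDiffAt ℝ (⊤ : ℕ∞) (pdu f) y := contDiffAt_pd hf (1, 0)

lemma contDiffAt_pdv {f : ℝ × ℝ → E} {y : ℝ × ℝ} (hf : ContDiffAt ℝ (⊤ : ℕ∞) f y) :
    ContDiffAt ℝ (⊤ : ℕ∞) (pdv f) y := contDiffAt_pd hf (0, 1)

lemma pd_symm {f : ℝ × ℝ → E} {y : ℝ × ℝ} (hf : ContDiffAt ℝ (⊤ : ℕ∞) f y) :
    pdu (pdv f) y = pdv (pdu f) y := by
  have hd : DifferentiableAt ℝ (fderiv ℝ f) y :=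
    (hf.fderiv_right (m := ((⊤ : ℕ∞) : WithTop ℕ∞)) (by simp)).differentiableAt (by simp)
  have h1 : ∀ v w : ℝ × ℝ, fderiv ℝ (fun z => fderiv ℝ f z v) y w
      = fderiv ℝ (fderiv ℝ f) y w v := by
    intro v w
    rw [fderiv_clm_apply hd (differentiableAt_const v)]
    simp
  have hs := (hf.isSymmSndFDerivAt (by rw [minSmoothness_of_isRCLikeNormedField]; exact WithTop.coe_le_coe.mpr le_top)).eq
  show fderiv ℝ (fun z => fderiv ℝ f z (0,1)) y (1,0)
      = fderiv ℝ (fun z => fderiv ℝ f z (1,0)) y (0,1)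
  rw [h1, h1, hs]

lemma pd_congr {F G : ℝ × ℝ → E} {U : Set (ℝ × ℝ)} (hU : IsOpen U) {x : ℝ × ℝ} (hx : x ∈ U)
    (h : ∀ y ∈ U, F y = G y) : fderiv ℝ F x = fderiv ℝ G x := by
  have hFG : F =ᶠ[nhds x] G := Filter.eventually_of_mem (hU.mem_nhds hx) h
  exact hFG.fderiv_eq

lemma pd_inner {f g : ℝ × ℝ → ℍ[ℝ]} {y : ℝ × ℝ} (v : ℝ × ℝ)
    (hf : DifferentiableAt ℝ f y) (hg : DifferentiableAt ℝ g y) :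
    fderiv ℝ (fun z => ⟪f z, g z⟫) y v = ⟪f y, fderiv ℝ g y v⟫ + ⟪fderiv ℝ f y v, g y⟫ :=
  fderiv_inner_apply ℝ hf hg v

lemma pd_mul {g h : ℝ × ℝ → ℝ} {y : ℝ × ℝ} (v : ℝ × ℝ)
    (hg : DifferentiableAt ℝ g y) (hh : DifferentiableAt ℝ h y) :
    fderiv ℝ (fun z => g z * h z) y v
      = fderiv ℝ g y v * h y + g y * fderiv ℝ h y v := by
  rw [fderiv_fun_mul hg hh]
  simp [smul_eq_mul]; ring

lemma pd_exp {ω : ℝ × ℝ → ℝ} {y : ℝ × ℝ} (v : ℝ × ℝ) (hω : DifferentiableAt ℝ ω y) :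
    fderiv ℝ (fun z => Real.exp (ω z)) y v = Real.exp (ω y) * fderiv ℝ ω y v := by
  rw [fderiv_exp hω]; simp [smul_eq_mul]

set_option maxHeartbeats 1000000 in
lemma parseval4 {c : ℝ} (hc : 0 < c) (e₀ e₁ e₂ e₃ z : ℍ[ℝ])
    (h00 : ⟪e₀, e₀⟫ = 1) (h11 : ⟪e₁, e₁⟫ = c) (h22 : ⟪e₂, e₂⟫ = c) (h33 : ⟪e₃, e₃⟫ = 1)
    (h01 : ⟪e₀, e₁⟫ = 0) (h02 : ⟪e₀, e₂⟫ = 0) (h03 : ⟪e₀, e₃⟫ = 0)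
    (h12 : ⟪e₁, e₂⟫ = 0) (h13 : ⟪e₁, e₃⟫ = 0) (h23 : ⟪e₂, e₃⟫ = 0) :
    c * ⟪z, z⟫ = c * ⟪z, e₀⟫ ^ 2 + ⟪z, e₁⟫ ^ 2 + ⟪z, e₂⟫ ^ 2 + c * ⟪z, e₃⟫ ^ 2 := by
  have h10 : ⟪e₁, e₀⟫ = 0 := by rw [real_inner_comm]; exact h01
  have h20 : ⟪e₂, e₀⟫ = 0 := by rw [real_inner_comm]; exact h02
  have h30 : ⟪e₃, e₀⟫ = 0 := by rw [real_inner_comm]; exact h03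
  have h21 : ⟪e₂, e₁⟫ = 0 := by rw [real_inner_comm]; exact h12
  have h31 : ⟪e₃, e₁⟫ = 0 := by rw [real_inner_comm]; exact h13
  have h32 : ⟪e₃, e₂⟫ = 0 := by rw [real_inner_comm]; exact h23
  have hc0 : c ≠ 0 := ne_of_gt hc
  have hne : ∀ q : ℍ[ℝ], ⟪q, q⟫ = 1 → q ≠ 0 := by
    intro q hq h0; rw [h0] at hq; simp at hq
  have hnec : ∀ q : ℍ[ℝ], ⟪q, q⟫ = c → q ≠ 0 := by
    intro q hq h0; rw [h0] at hq; simp at hq; exact hc0 hq.symm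
  have hLI : LinearIndependent ℝ (![e₀, e₁, e₂, e₃] : Fin 4 → ℍ[ℝ]) := by
    apply linearIndependent_of_ne_zero_of_inner_eq_zero (𝕜 := ℝ)
    · intro i
      fin_cases i
      · exact hne e₀ h00
      · exact hnec e₁ h11
      · exact hnec e₂ h22
      · exact hne e₃ h33
    · intro i j hij
      fin_cases i <;> fin_cases j <;>
        first
          | exact absurd rfl hij
          | assumption
  have hsp : Submodule.span ℝ (Set.range (![e₀, e₁, e₂, e₃] : Fin 4 → ℍ[ℝ])) = ⊤ :=
    hLI.span_eq_top_of_card_eq_finrank (by simp [Quaternion.finrank_eq_four])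
  set w : ℍ[ℝ] := z - (⟪z, e₀⟫ • e₀ + (⟪z, e₁⟫ / c) • e₁ + (⟪z, e₂⟫ / c) • e₂ + ⟪z, e₃⟫ • e₃)
    with hwdef
  have hw₀ : ⟪e₀, w⟫ = 0 := by
    simp only [hwdef, inner_sub_right, inner_add_right, real_inner_smul_right, h00, h01, h02,
      h03, real_inner_comm e₀ z]
    ring
  have hw₁ : ⟪e₁, w⟫ = 0 := by
    simp only [hwdef, inner_sub_right, inner_add_right, real_inner_smul_right, h10, h11, h12,
      h13, real_inner_comm e₁ z]
    field_simp
    ring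
  have hw₂ : ⟪e₂, w⟫ = 0 := by
    simp only [hwdef, inner_sub_right, inner_add_right, real_inner_smul_right, h20, h21, h22,
      h23, real_inner_comm e₂ z]
    field_simp
    ring
  have hw₃ : ⟪e₃, w⟫ = 0 := by
    simp only [hwdef, inner_sub_right, inner_add_right, real_inner_smul_right, h30, h31, h32,
      h33, real_inner_comm e₃ z]
    ring
  have hw : ∀ i, ⟪(![e₀, e₁, e₂, e₃] : Fin 4 → ℍ[ℝ]) i, w⟫ = 0 := by
    intro i
    fin_cases i
    · exact hw₀
    · exact hw₁
    · exact hw₂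
    · exact hw₃
  have hall : ∀ u ∈ Submodule.span ℝ (Set.range (![e₀, e₁, e₂, e₃] : Fin 4 → ℍ[ℝ])),
      ⟪u, w⟫ = 0 := by
    intro u hu
    induction hu using Submodule.span_induction with
    | mem u hu => obtain ⟨i, rfl⟩ := hu; exact hw i
    | zero => simp
    | add u v _ _ hu hv => rw [inner_add_left, hu, hv]; ring
    | smul a u _ hu => rw [real_inner_smul_left, hu]; ring
  have hw0 : w = 0 := inner_self_eq_zero.mp (hall _ (by rw [hsp]; trivial))
  have hz : z = ⟪z, e₀⟫ • e₀ + (⟪z, e₁⟫ / c) • e₁ + (⟪z, e₂⟫ / c) • e₂ + ⟪z, e₃⟫ • e₃ :=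
    sub_eq_zero.mp hw0
  conv_lhs => rw [hz]
  simp only [inner_add_left, inner_add_right, real_inner_smul_left, real_inner_smul_right,
    h00, h11, h22, h33, h01, h02, h03, h12, h13, h23, h10, h20, h30, h21, h31, h32,
    real_inner_comm e₀ z, real_inner_comm e₁ z, real_inner_comm e₂ z, real_inner_comm e₃ z]
  field_simp
  ring

lemma Nfacts {c : ℝ} (hc : 0 < c) (P Pu Pv : ℍ[ℝ])
    (hP : ⟪P, P⟫ = 1) (hPuP : ⟪Pu, P⟫ = 0) (hPvP : ⟪Pv, P⟫ = 0)
    (hEE : ⟪Pu, Pu⟫ = c) (hGG : ⟪Pv, Pv⟫ = c) (hFF : ⟪Pu, Pv⟫ = 0) :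
    P * (c⁻¹ • crossQ (P⁻¹ * Pu) (P⁻¹ * Pv)) = c⁻¹ • (Pu * star P * Pv)
    ∧ ⟪c⁻¹ • (Pu * star P * Pv), c⁻¹ • (Pu * star P * Pv)⟫ = 1
    ∧ ⟪c⁻¹ • (Pu * star P * Pv), P⟫ = 0
    ∧ ⟪c⁻¹ • (Pu * star P * Pv), Pu⟫ = 0
    ∧ ⟪c⁻¹ • (Pu * star P * Pv), Pv⟫ = 0 := by
  have hc0 : c ≠ 0 := ne_of_gt hc
  have hnsP : normSq P = 1 := by rw [← Quaternion.inner_self]; exact hP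
  have hnsPu : normSq Pu = c := by rw [← Quaternion.inner_self]; exact hEE
  have hnsPv : normSq Pv = c := by rw [← Quaternion.inner_self]; exact hGG
  have hPP : P * star P = 1 := by
    rw [Quaternion.self_mul_star, hnsP, Quaternion.coe_one]
  have hinv : P⁻¹ = star P := inv_eq_of_mul_eq_one_right hPP
  set a' : ℍ[ℝ] := star P * Pu with ha'
  set b' : ℍ[ℝ] := star P * Pv with hb'
  have ra : a'.re = 0 := by
    rw [ha', re_comm]
    have := Quaternion.inner_def Pu P
    rw [hPuP] at this; exact this.symm
  have rb : b'.re = 0 := by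
    rw [hb', re_comm]
    have := Quaternion.inner_def Pv P
    rw [hPvP] at this; exact this.symm
  have rab : (a' * b').re = 0 := by
    have e1 : a' * star b' = star P * (Pu * star Pv * P) := by
      rw [ha', hb', star_mul, star_star]; noncomm_ring
    have e2 : (a' * star b').re = (Pu * star Pv).re := by
      rw [e1, re_comm]
      have : Pu * star Pv * P * star P = Pu * star Pv := by
        rw [mul_assoc, hPP, mul_one]
      rw [this]
    have e3 : (a' * star b').re = 0 := by
      rw [e2]
      have := Quaternion.inner_def Pu Pv
      rw [hFF] at this; exact this.symm
    have e4 : star b' = -b' := star_eq_neg' rb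
    rw [e4, mul_neg, Quaternion.re_neg] at e3
    linarith
  have hcross : crossQ a' b' = a' * b' := by
    have e5 : star (a' * b') = b' * a' := by
      rw [star_mul, star_eq_neg' ra, star_eq_neg' rb, neg_mul_neg]
    have e6 : star (a' * b') = -(a' * b') := star_eq_neg' rab
    have e7 : b' * a' = -(a' * b') := by rw [← e5, e6]
    rw [crossQ, e7, sub_neg_eq_add, ← two_smul ℝ, smul_smul]
    norm_num
  have hmain : P * (c⁻¹ • crossQ (P⁻¹ * Pu) (P⁻¹ * Pv)) = c⁻¹ • (Pu * star P * Pv) := by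
    rw [hinv, ← ha', ← hb', hcross, mul_smul_comm]
    congr 1
    have : P * (a' * b') = P * star P * (Pu * (star P * Pv)) := by
      rw [ha', hb']; noncomm_ring
    rw [this, hPP, one_mul, ← mul_assoc]
  refine ⟨hmain, ?_, ?_, ?_, ?_⟩
  · rw [real_inner_smul_left, real_inner_smul_right, Quaternion.inner_self]
    have : normSq (Pu * star P * Pv) = c * c := by
      rw [map_mul, map_mul, Quaternion.normSq_star, hnsP, hnsPu, hnsPv, mul_one]
    rw [this]; field_simp
  · rw [real_inner_smul_left, Quaternion.inner_def]
    have : (Pu * star P * Pv * star P).re = (a' * b').re := by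
      rw [re_comm]
      congr 1
      rw [ha', hb']; noncomm_ring
    rw [this, rab, mul_zero]
  · rw [real_inner_smul_left, Quaternion.inner_def]
    have : (Pu * star P * Pv * star Pu).re = (star Pu * Pu * (star P * Pv)).re := by
      rw [re_comm]; congr 1; noncomm_ring
    rw [this, Quaternion.star_mul_self, hnsPu, Quaternion.coe_mul_eq_smul,
      Quaternion.re_smul, ← hb', rb]
    simp
  · rw [real_inner_smul_left, Quaternion.inner_def]
    have e8 : Pu * star P * Pv * star Pv = (Pu * star P) * (Pv * star Pv) := by noncomm_ring
    rw [e8, Quaternion.self_mul_star, hnsPv, re_comm, Quaternion.coe_mul_eq_smul,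
      Quaternion.re_smul]
    have : (Pu * star P).re = 0 := by
      have := Quaternion.inner_def Pu P
      rw [hPuP] at this; exact this.symm
    rw [this]; simp

end S11

/-- a minimal surface in `S³` in isothermal coordinates with conformal
factor `2e^ω` and Hopf differential normalized to `σ(∂z,∂z) = −1` has conformal factor
satisfying the Sinh-Gordon equation `Δω = −8 sinh ω`. -/
theorem stmt11 (U : Set (ℝ × ℝ)) (hU : IsOpen U)
    (ω : ℝ × ℝ → ℝ) (hω : ContDiffOn ℝ (⊤ : ℕ∞) ω U)
    (p : ℝ × ℝ → ℍ[ℝ]) (hp : ContDiffOn ℝ (⊤ : ℕ∞) p U)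
    (hunit : ∀ x ∈ U, ‖p x‖ = 1)
    (hE : ∀ x ∈ U, ipQ (pdu p x) (pdu p x) = 2 * Real.exp (ω x))
    (hG : ∀ x ∈ U, ipQ (pdv p x) (pdv p x) = 2 * Real.exp (ω x))
    (hF : ∀ x ∈ U, ipQ (pdu p x) (pdv p x) = 0)
    (hmin : ∀ x ∈ U, pdu (pdu p) x + pdv (pdv p) x = -((4 * Real.exp (ω x)) • p x))
    (N : ℝ × ℝ → ℍ[ℝ])
    (hN : ∀ x ∈ U, N x =
      p x * ((2 * Real.exp (ω x))⁻¹ • crossQ ((p x)⁻¹ * pdu p x) ((p x)⁻¹ * pdv p x)))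
    (hHopf1 : ∀ x ∈ U, ipQ (pdu (pdu p) x - pdv (pdv p) x) (N x) = -4)
    (hHopf2 : ∀ x ∈ U, ipQ (pdv (pdu p) x) (N x) = 0) :
    ∀ x ∈ U, pdu (pdu ω) x + pdv (pdv ω) x = -8 * Real.sinh (ω x) := by
  have ip : ∀ x y : ℍ[ℝ], ipQ x y = ⟪x, y⟫ := fun x y => (Quaternion.inner_def x y).symm
  -- smoothness and differentiability
  have hCp : ∀ y ∈ U, ContDiffAt ℝ (⊤ : ℕ∞) p y := fun y hy => hp.contDiffAt (hU.mem_nhds hy)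
  have hCω : ∀ y ∈ U, ContDiffAt ℝ (⊤ : ℕ∞) ω y := fun y hy => hω.contDiffAt (hU.mem_nhds hy)
  have hCpu : ∀ y ∈ U, ContDiffAt ℝ (⊤ : ℕ∞) (pdu p) y := fun y hy => S11.contDiffAt_pdu (hCp y hy)
  have hCpv : ∀ y ∈ U, ContDiffAt ℝ (⊤ : ℕ∞) (pdv p) y := fun y hy => S11.contDiffAt_pdv (hCp y hy)
  have hCpuu : ∀ y ∈ U, ContDiffAt ℝ (⊤ : ℕ∞) (pdu (pdu p)) y :=
    fun y hy => S11.contDiffAt_pdu (hCpu y hy)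
  have hCpuv : ∀ y ∈ U, ContDiffAt ℝ (⊤ : ℕ∞) (pdv (pdu p)) y :=
    fun y hy => S11.contDiffAt_pdv (hCpu y hy)
  have dp : ∀ y ∈ U, DifferentiableAt ℝ p y :=
    fun y hy => (hCp y hy).differentiableAt (by simp)
  have dpu : ∀ y ∈ U, DifferentiableAt ℝ (pdu p) y :=
    fun y hy => (hCpu y hy).differentiableAt (by simp)
  have dpv : ∀ y ∈ U, DifferentiableAt ℝ (pdv p) y :=
    fun y hy => (hCpv y hy).differentiableAt (by simp)
  have dpuu : ∀ y ∈ U, DifferentiableAt ℝ (pdu (pdu p)) y :=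
    fun y hy => (hCpuu y hy).differentiableAt (by simp)
  have dpuv : ∀ y ∈ U, DifferentiableAt ℝ (pdv (pdu p)) y :=
    fun y hy => (hCpuv y hy).differentiableAt (by simp)
  have dω : ∀ y ∈ U, DifferentiableAt ℝ ω y :=
    fun y hy => (hCω y hy).differentiableAt (by simp)
  have dωu : ∀ y ∈ U, DifferentiableAt ℝ (pdu ω) y :=
    fun y hy => ((S11.contDiffAt_pdu (hCω y hy))).differentiableAt (by simp)
  have dωv : ∀ y ∈ U, DifferentiableAt ℝ (pdv ω) y :=
    fun y hy => ((S11.contDiffAt_pdv (hCω y hy))).differentiableAt (by simp)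
  -- inner-product hypotheses in inner form
  have hE' : ∀ y ∈ U, ⟪pdu p y, pdu p y⟫ = 2 * Real.exp (ω y) := by
    intro y hy; rw [← ip]; exact hE y hy
  have hG' : ∀ y ∈ U, ⟪pdv p y, pdv p y⟫ = 2 * Real.exp (ω y) := by
    intro y hy; rw [← ip]; exact hG y hy
  have hF' : ∀ y ∈ U, ⟪pdu p y, pdv p y⟫ = 0 := by
    intro y hy; rw [← ip]; exact hF y hy
  have h1 : ∀ y ∈ U, ⟪p y, p y⟫ = 1 := by
    intro y hy
    rw [real_inner_self_eq_norm_mul_norm, hunit y hy]; norm_num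
  -- generic differentiation of inner-product identities on U
  have D : ∀ (f g : ℝ × ℝ → ℍ[ℝ]) (F : ℝ × ℝ → ℝ) (v : ℝ × ℝ),
      (∀ y ∈ U, DifferentiableAt ℝ f y) → (∀ y ∈ U, DifferentiableAt ℝ g y) →
      (∀ y ∈ U, ⟪f y, g y⟫ = F y) → ∀ y ∈ U,
      ⟪f y, fderiv ℝ g y v⟫ + ⟪fderiv ℝ f y v, g y⟫ = fderiv ℝ F y v := by
    intro f g F v hf hg h y hy
    rw [← S11.pd_inner v (hf y hy) (hg y hy)]
    rw [S11.pd_congr hU hy h]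
  -- derivatives of the conformal factor function
  have dE : ∀ (v : ℝ × ℝ), ∀ y ∈ U,
      fderiv ℝ (fun z => 2 * Real.exp (ω z)) y v = 2 * (Real.exp (ω y) * fderiv ℝ ω y v) := by
    intro v y hy
    rw [fderiv_const_mul ((dω y hy).exp)]
    simp only [ContinuousLinearMap.smul_apply, smul_eq_mul]
    rw [S11.pd_exp v (dω y hy)]
  have dC : ∀ (c : ℝ) (v : ℝ × ℝ) (y : ℝ × ℝ),
      fderiv ℝ (fun _ : ℝ × ℝ => c) y v = 0 := by
    intro c v y; simp
  -- first-order orthogonality relations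
  have o1 : ∀ y ∈ U, ⟪pdu p y, p y⟫ = 0 := by
    intro y hy
    have h0 := D p p (fun _ => (1 : ℝ)) (1, 0) dp dp h1 y hy
    rw [dC 1 (1, 0) y, S11.pdu_eq] at h0
    have hcomm := real_inner_comm (p y) (pdu p y)
    linarith
  have o2 : ∀ y ∈ U, ⟪pdv p y, p y⟫ = 0 := by
    intro y hy
    have h0 := D p p (fun _ => (1 : ℝ)) (0, 1) dp dp h1 y hy
    rw [dC 1 (0, 1) y, S11.pdv_eq] at h0
    have hcomm := real_inner_comm (p y) (pdv p y)
    linarith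
  -- second-order relations
  have o3 : ∀ y ∈ U, ⟪pdu (pdu p) y, p y⟫ = -(2 * Real.exp (ω y)) := by
    intro y hy
    have h0 := D (pdu p) p (fun _ => (0 : ℝ)) (1, 0) dpu dp o1 y hy
    rw [dC 0 (1, 0) y, S11.pdu_eq, S11.pdu_eq] at h0
    have hcomm := real_inner_comm (pdu p y) (pdu p y)
    have := hE' y hy
    linarith
  have o4 : ∀ y ∈ U, ⟪pdv (pdu p) y, p y⟫ = 0 := by
    intro y hy
    have h0 := D (pdu p) p (fun _ => (0 : ℝ)) (0, 1) dpu dp o1 y hy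
    rw [dC 0 (0, 1) y, S11.pdv_eq, S11.pdv_eq] at h0
    have := hF' y hy
    linarith
  have o5 : ∀ y ∈ U, ⟪pdu (pdu p) y, pdu p y⟫ = Real.exp (ω y) * pdu ω y := by
    intro y hy
    have h0 := D (pdu p) (pdu p) (fun z => 2 * Real.exp (ω z)) (1, 0) dpu dpu hE' y hy
    rw [dE (1, 0) y hy, S11.pdu_eq, S11.pdu_eq] at h0
    have hcomm := real_inner_comm (pdu p y) (pdu (pdu p) y)
    linarith
  have o6 : ∀ y ∈ U, ⟪pdv (pdu p) y, pdu p y⟫ = Real.exp (ω y) * pdv ω y := by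
    intro y hy
    have h0 := D (pdu p) (pdu p) (fun z => 2 * Real.exp (ω z)) (0, 1) dpu dpu hE' y hy
    rw [dE (0, 1) y hy, S11.pdv_eq, S11.pdv_eq] at h0
    have hcomm := real_inner_comm (pdu p y) (pdv (pdu p) y)
    linarith
  -- symmetry of mixed partials of p
  have hsym : ∀ y ∈ U, pdu (pdv p) y = pdv (pdu p) y := fun y hy => S11.pd_symm (hCp y hy)
  have oB : ∀ y ∈ U, ⟪pdv (pdu p) y, pdv p y⟫ = Real.exp (ω y) * pdu ω y := by
    intro y hy
    have h0 := D (pdv p) (pdv p) (fun z => 2 * Real.exp (ω z)) (1, 0) dpv dpv hG' y hy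
    rw [dE (1, 0) y hy, S11.pdu_eq, S11.pdu_eq, hsym y hy] at h0
    have hcomm := real_inner_comm (pdv p y) (pdv (pdu p) y)
    linarith
  have oA : ∀ y ∈ U, ⟪pdu (pdu p) y, pdv p y⟫ = -(Real.exp (ω y) * pdv ω y) := by
    intro y hy
    have h0 := D (pdu p) (pdv p) (fun _ => (0 : ℝ)) (1, 0) dpu dpv hF' y hy
    rw [dC 0 (1, 0) y, S11.pdu_eq, S11.pdu_eq, hsym y hy] at h0
    have hcomm := real_inner_comm (pdu p y) (pdv (pdu p) y)
    have := o6 y hy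
    linarith
  -- now fix the point x
  intro x hx
  set e : ℝ := Real.exp (ω x) with hedef
  have he : 0 < e := Real.exp_pos _
  have he0 : e ≠ 0 := ne_of_gt he
  have hcpos : (0 : ℝ) < 2 * e := by linarith
  -- the unit normal facts
  obtain ⟨hNeq, hNN, hNP, hNPu, hNPv⟩ :=
    S11.Nfacts (c := 2 * e) hcpos (p x) (pdu p x) (pdv p x)
      (h1 x hx) (o1 x hx) (o2 x hx) (hE' x hx) (hG' x hx) (hF' x hx)
  have hNx : N x = (2 * e)⁻¹ • (pdu p x * star (p x) * pdv p x) := by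
    rw [hN x hx]; exact hNeq
  have hNN' : ⟪N x, N x⟫ = 1 := by rw [hNx]; exact hNN
  have hNP' : ⟪N x, p x⟫ = 0 := by rw [hNx]; exact hNP
  have hNPu' : ⟪N x, pdu p x⟫ = 0 := by rw [hNx]; exact hNPu
  have hNPv' : ⟪N x, pdv p x⟫ = 0 := by rw [hNx]; exact hNPv
  -- second fundamental form values
  have hPvv : pdv (pdv p) x = -((4 * Real.exp (ω x)) • p x) - pdu (pdu p) x :=
    eq_sub_of_add_eq' (hmin x hx)
  have hPuuN : ⟪pdu (pdu p) x, N x⟫ = -2 := by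
    have hh1 : ⟪pdu (pdu p) x - pdv (pdv p) x, N x⟫ = -4 := by
      rw [← ip]; exact hHopf1 x hx
    have hh2 : ⟪pdu (pdu p) x + pdv (pdv p) x, N x⟫ = 0 := by
      rw [hmin x hx, inner_neg_left, real_inner_smul_left, real_inner_comm, hNP']
      ring
    rw [inner_sub_left] at hh1
    rw [inner_add_left] at hh2
    linarith
  have hPuvN : ⟪pdv (pdu p) x, N x⟫ = 0 := by rw [← ip]; exact hHopf2 x hx
  -- Parseval inputs
  have h01x : ⟪p x, pdu p x⟫ = 0 := by rw [real_inner_comm]; exact o1 x hx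
  have h02x : ⟪p x, pdv p x⟫ = 0 := by rw [real_inner_comm]; exact o2 x hx
  have h03x : ⟪p x, N x⟫ = 0 := by rw [real_inner_comm]; exact hNP'
  have h13x : ⟪pdu p x, N x⟫ = 0 := by rw [real_inner_comm]; exact hNPu'
  have h23x : ⟪pdv p x, N x⟫ = 0 := by rw [real_inner_comm]; exact hNPv'
  have par1 := S11.parseval4 hcpos (p x) (pdu p x) (pdv p x) (N x) (pdu (pdu p) x)
    (h1 x hx) (hE' x hx) (hG' x hx) hNN' h01x h02x h03x (hF' x hx) h13x h23x
  have par2 := S11.parseval4 hcpos (p x) (pdu p x) (pdv p x) (N x) (pdv (pdu p) x)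
    (h1 x hx) (hE' x hx) (hG' x hx) hNN' h01x h02x h03x (hF' x hx) h13x h23x
  rw [o3 x hx, o5 x hx, oA x hx, hPuuN] at par1
  rw [o4 x hx, o6 x hx, oB x hx, hPuvN] at par2
  -- the inner product of p_uu with p_vv
  have hPuuPvv : ⟪pdu (pdu p) x, pdv (pdv p) x⟫
      = 8 * Real.exp (ω x) ^ 2 - ⟪pdu (pdu p) x, pdu (pdu p) x⟫ := by
    rw [hPvv, inner_sub_right, inner_neg_right, real_inner_smul_right, o3 x hx]
    ring
  -- differentiate identity (A) in the v direction
  have T1 := D (pdu (pdu p)) (pdv p) (fun z => -(Real.exp (ω z) * pdv ω z)) (0, 1)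
    dpuu dpv oA x hx
  rw [S11.pdv_eq, S11.pdv_eq] at T1
  have hRv : fderiv ℝ (fun z => -(Real.exp (ω z) * pdv ω z)) x (0, 1)
      = -(Real.exp (ω x) * pdv ω x * pdv ω x + Real.exp (ω x) * pdv (pdv ω) x) := by
    rw [fderiv_fun_neg, ContinuousLinearMap.neg_apply,
      S11.pd_mul (0, 1) ((dω x hx).exp) (dωv x hx), S11.pd_exp (0, 1) (dω x hx),
      S11.pdv_eq, S11.pdv_eq]
  rw [hRv, hPuuPvv] at T1
  -- differentiate identity (B) in the u direction
  have T2 := D (pdv (pdu p)) (pdv p) (fun z => Real.exp (ω z) * pdu ω z) (1, 0)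
    dpuv dpv oB x hx
  rw [S11.pdu_eq, S11.pdu_eq, hsym x hx] at T2
  have hRu : fderiv ℝ (fun z => Real.exp (ω z) * pdu ω z) x (1, 0)
      = Real.exp (ω x) * pdu ω x * pdu ω x + Real.exp (ω x) * pdu (pdu ω) x := by
    rw [S11.pd_mul (1, 0) ((dω x hx).exp) (dωu x hx), S11.pd_exp (1, 0) (dω x hx),
      S11.pdu_eq, S11.pdu_eq]
  rw [hRu] at T2
  -- symmetry of the third derivative
  have T3 : pdu (pdv (pdu p)) x = pdv (pdu (pdu p)) x := S11.pd_symm (hCpu x hx)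
  rw [T3] at T2
  -- collect everything
  have key2 : 2 * Real.exp (ω x) ^ 2 * (pdu (pdu ω) x + pdv (pdv ω) x)
      = 8 * Real.exp (ω x) - 8 * Real.exp (ω x) ^ 3 := by
    linear_combination (2 * Real.exp (ω x)) * T1 - (2 * Real.exp (ω x)) * T2 + par1 + par2
  have h2F : (2 * Real.exp (ω x) ^ 2) ≠ 0 := by positivity
  have hexp : pdu (pdu ω) x + pdv (pdv ω) x
      = (8 * Real.exp (ω x) - 8 * Real.exp (ω x) ^ 3) / (2 * Real.exp (ω x) ^ 2) := by
    rw [eq_div_iff h2F]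
    linear_combination key2
  rw [hexp, Real.sinh_eq, Real.exp_neg]
  field_simp
  ring
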